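/- Let G be a Polish group acting on a set X, let 𝒱 be a family of open subgroups of G, and let ℬ be a family of subsets of X such that (i) every B ∈ ℬ is invariant under some member of 𝒱 (i.e., there is V ∈ 𝒱 with v • B = B for all v ∈ V), and (ii) for every B ∈ ℬ, every V ∈ 𝒱 and every g ∈ G, the Vaught *-transform B^{*(V·g)} of B with respect to the right coset V·g = {v * g : v ∈ V} belongs to ℬ. Then ℬ is G-invariant: for every g ∈ G and B ∈ ℬ, the set g • B belongs to ℬ. -/

import Mathlib

/-!
If `B` is invariant under a subgroup `V`, then for `u = v * h` in the right coset `V h` we have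
`u • x ∈ B ↔ h • x ∈ B`. So the set `{u ∈ V h : u • x ∈ B}` is either all of `V h` or empty, and
since an open coset of a Polish group is a nonempty Baire space, it is comeagre exactly in the
first case. Hence `B^{*(V h)} = h⁻¹ • B`, and closure of `ℬ` under these transforms with
`h = g⁻¹` yields `g • B ∈ ℬ`.
-/

open Pointwise

/-- The Vaught *-transform of `B ⊆ X` with respect to a subset `U` of the acting
group `G`: the set of `x ∈ X` such that `{g ∈ U : g • x ∈ B}` is comeagre in the
subspace `U`. -/
def vaughtStar {G X : Type*} [Group G] [TopologicalSpace G] [MulAction G X]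
    (U : Set G) (B : Set X) : Set X :=
  {x : X | {u : U | (u : G) • x ∈ B} ∈ residual U}

open Filter

theorem residual_neBot {X : Type*} [TopologicalSpace X] [BaireSpace X] [Nonempty X] :
    (residual X).NeBot := by
  refine forall_mem_nonempty_iff_neBot.mp fun s hs => ?_
  exact (dense_of_mem_residual hs).nonempty

section VaughtStar

variable {G X : Type*} [Group G] [MulAction G X]

theorem smul_mem_iff_of_mem_image_mul_right {V : Set G} {B : Set X}
    (hB : ∀ v ∈ V, v • B = B) {h u : G} (hu : u ∈ (· * h) '' V) (x : X) :
    u • x ∈ B ↔ h • x ∈ B := by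
  obtain ⟨v, hv, rfl⟩ := hu
  simpa only [mul_smul, hB v hv] using Set.smul_mem_smul_set_iff (a := v) (s := B) (x := h • x)

variable [TopologicalSpace G]

theorem mem_vaughtStar_iff_of_forall_smul_mem_iff {U : Set G} [BaireSpace U] [Nonempty U]
    {B : Set X} {x : X} {p : Prop} (h : ∀ u ∈ U, u • x ∈ B ↔ p) :
    x ∈ vaughtStar U B ↔ p := by
  have := residual_neBot (X := U)
  change (∀ᶠ u : U in residual U, (u : G) • x ∈ B) ↔ p
  rw [eventually_congr (Eventually.of_forall fun u : U => h u u.2)]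
  exact eventually_const

theorem vaughtStar_image_mul_right_eq_inv_smul [IsTopologicalGroup G] [BaireSpace G]
    {V : Subgroup G} (hV : IsOpen (V : Set G)) {B : Set X} (hB : ∀ v ∈ V, v • B = B) (h : G) :
    vaughtStar ((· * h) '' (V : Set G)) B = h⁻¹ • B := by
  have := (isOpenMap_mul_right h _ hV).baireSpace
  have : Nonempty ((· * h) '' (V : Set G)) := ⟨⟨1 * h, 1, V.one_mem, rfl⟩⟩
  ext x
  rw [Set.mem_smul_set_iff_inv_smul_mem, inv_inv]
  exact mem_vaughtStar_iff_of_forall_smul_mem_iff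
    fun u hu => smul_mem_iff_of_mem_image_mul_right hB hu x

end VaughtStar

/-- Let `G` be a Polish group acting on a set `X`, let `𝒱` be a
family of open subgroups of `G`, and let `ℬ` be a family of subsets of `X` such
that (i) every `B ∈ ℬ` is invariant under some member of `𝒱`, and (ii) for every
`B ∈ ℬ`, `V ∈ 𝒱` and `g ∈ G`, the Vaught *-transform of `B` with respect to the
right coset `V·g` belongs to `ℬ`. Then `ℬ` is `G`-invariant: `g • B ∈ ℬ` for all
`g ∈ G`, `B ∈ ℬ`. -/
theorem family_invariant_of_closed_under_vaught_star
    {G X : Type*} [Group G] [TopologicalSpace G] [IsTopologicalGroup G] [PolishSpace G]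
    [MulAction G X]
    (𝒱 : Set (Subgroup G)) (h𝒱 : ∀ V ∈ 𝒱, IsOpen (V : Set G))
    (ℬ : Set (Set X))
    (hinv : ∀ B ∈ ℬ, ∃ V ∈ 𝒱, ∀ v ∈ V, v • B = B)
    (hstar : ∀ B ∈ ℬ, ∀ V ∈ 𝒱, ∀ g : G,
      vaughtStar ((fun v : G => v * g) '' (V : Set G)) B ∈ ℬ) :
    ∀ g : G, ∀ B ∈ ℬ, g • B ∈ ℬ := by
  intro g B hB
  obtain ⟨V, hV, hVB⟩ := hinv B hB
  have hstar' := hstar B hB V hV g⁻¹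
  rwa [vaughtStar_image_mul_right_eq_inv_smul (h𝒱 V hV) hVB, inv_inv] at hstar'
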